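/- arXiv:quant-ph/9807056 — 4 statements merged into one kernel-verified Lean document; each statement's English description precedes it below -/
import Mathlib

section
/- If x lies in the closed linear span of the set of coboundaries {b − Uᵐ b : b ∈ H, m ∈ ℤ}, then the Cesàro averages (1/N) ∑_{n=0}^{N−1} Uⁿ x converge in norm to 0 as N → ∞. -/
open Filter Finset Topology

/-! By von Neumann's mean ergodic theorem the Cesàro averages of `x` converge to the orthogonal
projection of `x` onto the fixed space of `U`. A coboundary `b - Uᵐ b` is orthogonal to every fixed
vector `u`, because `⟪Uᵐ b, u⟫ = ⟪Uᵐ b, Uᵐ u⟫ = ⟪b, u⟫`; hence the closed span of the coboundaries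
lies in the orthogonal complement of the fixed space, where that projection vanishes. -/

namespace LinearIsometryEquiv

variable {𝕜 E : Type*} [RCLike 𝕜] [NormedAddCommGroup E] [InnerProductSpace 𝕜 E]

theorem coe_pow (U : E ≃ₗᵢ[𝕜] E) (n : ℕ) : ⇑(U ^ n) = U^[n] :=
  hom_coe_pow _ rfl (fun _ _ ↦ rfl) U n

theorem zpow_apply_of_apply_eq_self (U : E ≃ₗᵢ[𝕜] E) {u : E} (hu : U u = u) (m : ℤ) :
    (U ^ m) u = u := by
  have hu_inv : U⁻¹ u = u := U.symm_apply_eq.2 hu.symm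
  induction m using Int.induction_on with
  | zero => rfl
  | succ n ih => rw [zpow_add_one, coe_mul, Function.comp_apply, hu, ih]
  | pred n ih => rw [zpow_sub_one, coe_mul, Function.comp_apply, hu_inv, ih]

theorem inner_sub_zpow_apply_eq_zero (U : E ≃ₗᵢ[𝕜] E) (b : E) (m : ℤ) {u : E}
    (hu : U u = u) : inner 𝕜 (b - (U ^ m) b) u = 0 := by
  rw [inner_sub_left, sub_eq_zero]
  calc inner 𝕜 b u = inner 𝕜 ((U ^ m) b) ((U ^ m) u) := ((U ^ m).inner_map_map b u).symm
    _ = inner 𝕜 ((U ^ m) b) u := by rw [U.zpow_apply_of_apply_eq_self hu m]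

theorem closure_span_coboundaries_subset_orthogonal_eqLocus (U : E ≃ₗᵢ[𝕜] E) :
    closure (Submodule.span 𝕜 {y : E | ∃ (b : E) (m : ℤ), y = b - (U ^ m) b} : Set E) ⊆
      (U.toLinearIsometry.toContinuousLinearMap.eqLocus (1 : E →L[𝕜] E))ᗮ := by
  refine closure_minimal ?_ (Submodule.isClosed_orthogonal _)
  refine SetLike.coe_subset_coe.2 (Submodule.span_le.2 ?_)
  rintro _ ⟨b, m, rfl⟩
  exact (Submodule.mem_orthogonal' _ _).2 fun u hu ↦ U.inner_sub_zpow_apply_eq_zero b m hu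

theorem smul_sum_range_pow_apply_eq_birkhoffAverage (U : E ≃ₗᵢ[𝕜] E) (N : ℕ) (x : E) :
    (N : 𝕜)⁻¹ • ∑ n ∈ range N, (U ^ n) x = birkhoffAverage 𝕜 U id N x := by
  simp [birkhoffAverage, birkhoffSum, coe_pow]

end LinearIsometryEquiv

/-- If `x` lies in the closed linear span of the set of coboundaries
`{b − Uᵐ b : b ∈ H, m ∈ ℤ}`, then the Cesàro averages `(1/N) ∑_{n=0}^{N-1} Uⁿ x`
converge in norm to `0` as `N → ∞`. -/
theorem cesaro_averages_vanish_on_coboundary_span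
    {H : Type*} [NormedAddCommGroup H] [InnerProductSpace ℂ H] [CompleteSpace H]
    (U : H ≃ₗᵢ[ℂ] H) (x : H)
    (hx : x ∈ closure (Submodule.span ℂ {y : H | ∃ (b : H) (m : ℤ), y = b - (U ^ m) b} : Set H)) :
    Tendsto (fun N : ℕ => (N : ℂ)⁻¹ • ∑ n ∈ Finset.range N, (U ^ n) x)
      atTop (𝓝 0) := by
  have hproj : (U.toLinearIsometry.toContinuousLinearMap.eqLocus
      (1 : H →L[ℂ] H)).orthogonalProjectionOnto x = 0 :=
    Submodule.orthogonalProjectionOnto_eq_zero_iff.2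
      (U.closure_span_coboundaries_subset_orthogonal_eqLocus hx)
  have hlim :=
    U.toLinearIsometry.toContinuousLinearMap.tendsto_birkhoffAverage_orthogonalProjection
      U.toLinearIsometry.norm_toContinuousLinearMap_le x
  rw [hproj, ZeroMemClass.coe_zero] at hlim
  simp_rw [U.smul_sum_range_pow_apply_eq_birkhoffAverage]
  exact hlim
end

section
/- Reproducing kernel property of Bargmann space: let ψ : ℂ → ℂ be an entire function (complex-differentiable everywhere) with ∫_ℂ |ψ(w)|² dμ_ℏ(w) < ∞. Then for every z ∈ ℂ, ∫_ℂ exp(z·conj(w)/ℏ) · ψ(w) dμ_ℏ(w) = ψ(z). -/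
open MeasureTheory Complex

/-- The Bargmann Gaussian measure `μ_ℏ` on `ℂ`, with density
`z ↦ (πℏ)⁻¹ exp(−|z|²/ℏ)` with respect to Lebesgue measure on `ℂ ≅ ℝ²`. -/
noncomputable def bargmannMeasure (ℏ : ℝ) : Measure ℂ :=
  MeasureTheory.volume.withDensity
    (fun z => ENNReal.ofReal ((Real.pi * ℏ)⁻¹ * Real.exp (-‖z‖ ^ 2 / ℏ)))

/-!
Translating by `z` and completing the square, `-|u + z|² + z (ū + z̄) = -|u|² - u z̄`, turns the
kernel integral into `(πℏ)⁻¹ ∫ e^{-|u|²/ℏ} g(u) du` with `g(u) = e^{-u z̄/ℏ} ψ(u + z)` entire and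
`g(0) = ψ(z)`. In polar coordinates the angular integral of an entire function is `2π` times its
value at the centre (mean value property), so integrating `g` against any radial weight gives
`g(0)` times the total mass of the weight, here `πℏ`. The integrals exist by Cauchy–Schwarz, since
the kernel lies in `L²(μ_ℏ)`: `|e^{z w̄/ℏ}|² e^{-|w|²/ℏ} = e^{|z|²/ℏ} e^{-|w - z|²/ℏ}`.
-/

open Set ComplexConjugate
open scoped Real

section MeanValue

variable {E : Type*} [NormedAddCommGroup E]

theorem integrableOn_polarCoord_symm [NormedSpace ℝ E] {f : ℝ × ℝ → E} (hf : Integrable f) :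
    IntegrableOn (fun p => p.1 • f (polarCoord.symm p)) polarCoord.target := by
  have h := (integrableOn_image_iff_integrableOn_abs_det_fderiv_smul volume
    polarCoord.open_target.measurableSet
    (fun p _ => (hasFDerivAt_polarCoord_symm p).hasFDerivWithinAt) polarCoord.symm.injOn f).mp
    (by rw [polarCoord.symm_image_target_eq_source]; exact hf.integrableOn)
  refine h.congr_fun (fun p hp => ?_) polarCoord.open_target.measurableSet
  dsimp only
  rw [det_fderivPolarCoordSymm, abs_of_pos hp.1]

theorem Complex.integrableOn_polarCoord_symm [NormedSpace ℝ E] {f : ℂ → E} (hf : Integrable f) :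
    IntegrableOn (fun p => p.1 • f (Complex.polarCoord.symm p)) polarCoord.target :=
  _root_.integrableOn_polarCoord_symm <|
    (volume_preserving_equiv_real_prod.symm.integrable_comp_emb
      measurableEquivRealProd.symm.measurableEmbedding).mpr hf

theorem Differentiable.integral_Ioo_polarCoord_symm [NormedSpace ℂ E] [CompleteSpace E]
    {g : ℂ → E} (hg : Differentiable ℂ g) (r : ℝ) :
    ∫ θ in Ioo (-π) π, g (Complex.polarCoord.symm (r, θ)) = (2 * π) • g 0 := by
  have hmean : Real.circleAverage g 0 r = g 0 := hg.diffContOnCl.circleAverage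
  rw [Real.circleAverage_eq_integral_add (-π), intervalIntegral.integral_comp_add_right
    (fun θ => g (circleMap 0 r θ)), intervalIntegral.integral_of_le (by linarith [Real.pi_pos]),
    integral_Ioc_eq_integral_Ioo, zero_add, show 2 * π + -π = π by ring] at hmean
  have hcircle : ∀ θ : ℝ, Complex.polarCoord.symm (r, θ) = circleMap 0 r θ := fun θ => by
    simp [circleMap, Complex.exp_mul_I, ← ofReal_cos, ← ofReal_sin]
  simp_rw [hcircle]
  rw [← hmean, smul_smul, mul_inv_cancel₀ (by positivity), one_smul]

theorem Differentiable.integral_radial_smul [NormedSpace ℂ E] [CompleteSpace E]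
    {g : ℂ → E} (hg : Differentiable ℂ g) (ρ : ℝ → ℝ)
    (hint : Integrable (fun u : ℂ => ρ ‖u‖ • g u)) :
    ∫ u : ℂ, ρ ‖u‖ • g u = (2 * π * ∫ r in Ioi 0, r * ρ r) • g 0 := by
  have hpolar := Complex.integrableOn_polarCoord_symm hint
  rw [polarCoord_target, Measure.volume_eq_prod] at hpolar
  rw [← Complex.integral_comp_polarCoord_symm, polarCoord_target, Measure.volume_eq_prod,
    setIntegral_prod _ hpolar]
  have hangle : ∀ r ∈ Ioi (0 : ℝ), ∫ θ in Ioo (-π) π,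
      (r, θ).1 • ρ ‖Complex.polarCoord.symm (r, θ)‖ • g (Complex.polarCoord.symm (r, θ)) =
        (r * ρ r * (2 * π)) • g 0 := by
    intro r hr
    simp only [Complex.norm_polarCoord_symm, abs_of_pos (mem_Ioi.mp hr)]
    rw [integral_smul, integral_smul, hg.integral_Ioo_polarCoord_symm, smul_smul, smul_smul]
  rw [setIntegral_congr_fun measurableSet_Ioi hangle, integral_smul_const, integral_mul_const]
  congr 1
  ring

theorem Differentiable.integral_radial_smul_eq_smul_apply_zero [NormedSpace ℂ E] [CompleteSpace E]
    {g : ℂ → E} (hg : Differentiable ℂ g) {ρ : ℝ → ℝ} (hρ : Integrable fun u : ℂ => ρ ‖u‖)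
    (hint : Integrable (fun u : ℂ => ρ ‖u‖ • g u)) :
    ∫ u : ℂ, ρ ‖u‖ • g u = (∫ u : ℂ, ρ ‖u‖) • g 0 := by
  -- the same formula for the constant function `1` identifies the radial factor
  have hone := (differentiable_const (1 : ℂ)).integral_radial_smul ρ (hρ.smul_const 1)
  rw [integral_smul_const] at hone
  rw [hg.integral_radial_smul ρ hint, smul_left_injective ℝ one_ne_zero hone]

theorem Complex.integral_exp_neg_sq_norm_div {ℏ : ℝ} (hℏ : 0 < ℏ) :
    ∫ u : ℂ, Real.exp (-‖u‖ ^ 2 / ℏ) = π * ℏ := by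
  have h := GaussianFourier.integral_rexp_neg_mul_sq_norm (V := ℂ) (inv_pos.2 hℏ)
  simp only [Complex.finrank_real_complex, neg_mul, ← div_eq_inv_mul, div_inv_eq_mul] at h
  norm_num at h
  simpa only [neg_div] using h

theorem Complex.integrable_exp_neg_sq_norm_div {ℏ : ℝ} (hℏ : 0 < ℏ) :
    Integrable fun u : ℂ => Real.exp (-‖u‖ ^ 2 / ℏ) :=
  Integrable.of_integral_ne_zero <| by
    rw [integral_exp_neg_sq_norm_div hℏ]
    positivity

theorem Differentiable.integral_exp_neg_sq_norm_div_smul [NormedSpace ℂ E] [CompleteSpace E]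
    {g : ℂ → E} (hg : Differentiable ℂ g) {ℏ : ℝ} (hℏ : 0 < ℏ)
    (hint : Integrable fun u : ℂ => Real.exp (-‖u‖ ^ 2 / ℏ) • g u) :
    ∫ u : ℂ, Real.exp (-‖u‖ ^ 2 / ℏ) • g u = (π * ℏ) • g 0 := by
  rw [hg.integral_radial_smul_eq_smul_apply_zero (ρ := fun r => Real.exp (-r ^ 2 / ℏ))
    (integrable_exp_neg_sq_norm_div hℏ) hint, integral_exp_neg_sq_norm_div hℏ]

end MeanValue

section Bargmann

variable {E : Type*} [NormedAddCommGroup E] {ℏ : ℝ}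

theorem integral_bargmannMeasure [NormedSpace ℝ E] (hℏ : 0 < ℏ) (f : ℂ → E) :
    ∫ w, f w ∂bargmannMeasure ℏ = (π * ℏ)⁻¹ • ∫ w, Real.exp (-‖w‖ ^ 2 / ℏ) • f w := by
  rw [bargmannMeasure, integral_withDensity_eq_integral_toReal_smul (by fun_prop)
    (ae_of_all _ fun _ => ENNReal.ofReal_lt_top), ← integral_smul]
  refine integral_congr_ae (ae_of_all _ fun w => ?_)
  have hdens : 0 ≤ (π * ℏ)⁻¹ * Real.exp (-‖w‖ ^ 2 / ℏ) := by positivity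
  simp only [ENNReal.toReal_ofReal hdens, mul_smul]

theorem integrable_bargmannMeasure_iff [NormedSpace ℝ E] (hℏ : 0 < ℏ) {f : ℂ → E} :
    Integrable f (bargmannMeasure ℏ) ↔ Integrable fun w => Real.exp (-‖w‖ ^ 2 / ℏ) • f w := by
  rw [bargmannMeasure, integrable_withDensity_iff_integrable_smul' (by fun_prop)
    (ae_of_all _ fun _ => ENNReal.ofReal_lt_top),
    ← integrable_smul_iff (inv_ne_zero (by positivity : π * ℏ ≠ 0))
      (fun w => Real.exp (-‖w‖ ^ 2 / ℏ) • f w)]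
  refine integrable_congr (ae_of_all _ fun w => ?_)
  have hdens : 0 ≤ (π * ℏ)⁻¹ * Real.exp (-‖w‖ ^ 2 / ℏ) := by positivity
  simp only [ENNReal.toReal_ofReal hdens, mul_smul, Pi.smul_apply]

theorem sq_norm_cexp_mul_conj_div_mul_exp (z w : ℂ) :
    ‖cexp (z * conj w / ℏ)‖ ^ 2 * Real.exp (-‖w‖ ^ 2 / ℏ) =
      Real.exp (‖z‖ ^ 2 / ℏ) * Real.exp (-‖w - z‖ ^ 2 / ℏ) := by
  rw [norm_exp, ← Real.exp_nat_mul, ← Real.exp_add, ← Real.exp_add, div_ofReal_re]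
  congr 1
  simp only [← normSq_eq_norm_sq, normSq_sub, mul_re, conj_re, conj_im]
  ring

theorem exp_neg_sq_norm_add_smul_cexp (u z : ℂ) :
    Real.exp (-‖u + z‖ ^ 2 / ℏ) • cexp (z * conj (u + z) / ℏ) =
      Real.exp (-‖u‖ ^ 2 / ℏ) • cexp (-(u * conj z) / ℏ) := by
  simp only [real_smul, ofReal_exp, ← Complex.exp_add]
  congr 1
  push_cast
  simp only [← mul_conj', map_add]
  ring

theorem memLp_two_bargmannMeasure_cexp_mul_conj (hℏ : 0 < ℏ) (z : ℂ) :
    MemLp (fun w => cexp (z * conj w / ℏ)) 2 (bargmannMeasure ℏ) := by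
  rw [memLp_two_iff_integrable_sq_norm (by fun_prop : Continuous _).aestronglyMeasurable,
    integrable_bargmannMeasure_iff hℏ]
  simp_rw [smul_eq_mul, mul_comm (Real.exp _), sq_norm_cexp_mul_conj_div_mul_exp]
  exact ((integrable_exp_neg_sq_norm_div hℏ).comp_sub_right z).const_mul _

end Bargmann

/-- Reproducing kernel property of Bargmann space: for an entire function `ψ` which is
square-integrable with respect to `μ_ℏ`, `∫_ℂ exp(z conj(w)/ℏ) ψ(w) dμ_ℏ(w) = ψ(z)`. -/
theorem bargmann_reproducing_kernel (ℏ : ℝ) (hℏ : 0 < ℏ) (ψ : ℂ → ℂ)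
    (hψ : Differentiable ℂ ψ)
    (hψ2 : Integrable (fun w => ‖ψ w‖ ^ 2) (bargmannMeasure ℏ)) (z : ℂ) :
    ∫ w : ℂ, Complex.exp (z * (starRingEnd ℂ) w / (ℏ : ℂ)) * ψ w ∂(bargmannMeasure ℏ) =
      ψ z := by
  have hψL2 : MemLp ψ 2 (bargmannMeasure ℏ) :=
    (memLp_two_iff_integrable_sq_norm hψ.continuous.aestronglyMeasurable).2 hψ2
  have hint := (integrable_bargmannMeasure_iff hℏ).1
    ((memLp_two_bargmannMeasure_cexp_mul_conj hℏ z).integrable_mul hψL2)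
  set g : ℂ → ℂ := fun u => cexp (-(u * conj z) / ℏ) * ψ (u + z)
  have hshift : ∀ u, Real.exp (-‖u + z‖ ^ 2 / ℏ) • (cexp (z * conj (u + z) / ℏ) * ψ (u + z)) =
      Real.exp (-‖u‖ ^ 2 / ℏ) • g u := fun u => by
    rw [← smul_mul_assoc, exp_neg_sq_norm_add_smul_cexp, smul_mul_assoc]
  have hg : Differentiable ℂ g := by fun_prop
  rw [integral_bargmannMeasure hℏ, ← integral_add_right_eq_self _ z]
  simp_rw [hshift]
  rw [hg.integral_exp_neg_sq_norm_div_smul hℏ ((hint.comp_add_right z).congr (ae_of_all _ hshift)),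
    smul_smul, inv_mul_cancel₀ (by positivity), one_smul]
  simp [g]
end

section
/- Toeplitz quantization is anti-Wick ordered: let ψ : ℂ → ℂ be an entire function (complex-differentiable everywhere) with ∫_ℂ |ψ(w)|² dμ_ℏ(w) < ∞, and let m, n be natural numbers. Then for every z ∈ ℂ, ∫_ℂ exp(z·conj(w)/ℏ) · wᵐ · conj(w)ⁿ · ψ(w) dμ_ℏ(w) = ℏⁿ · (d/dz)ⁿ [zᵐ ψ(z)], the n-th iterated complex derivative of the function z ↦ zᵐ ψ(z) evaluated at z. -/
/-
Differentiating `z ↦ exp (z * conj w / ℏ)` brings down a factor `conj w / ℏ`, so by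
differentiation under the integral sign (dominated thanks to `ψ ∈ L²(μ_ℏ)` and the Gaussian decay
of `μ_ℏ`) the case `n` follows from the case `n = 0` by `n` complex derivatives in `z`. The case
`n = 0` is the reproducing property `∫ exp (z * conj w / ℏ) f w dμ_ℏ(w) = f z` for entire `f`:
after the translation `w = u + z` the integrand becomes `exp (-‖u‖² / ℏ)` times the entire function
`u ↦ exp (-u * conj z / ℏ) f (u + z)`, and in polar coordinates the mean value property on each
circle `‖u‖ = r` reduces the integral to its value at `u = 0`, which is `f z`.
-/

open MeasureTheory Complex

open Filter Set ComplexConjugate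
open scoped Real Nat

lemma integrable_exp_neg_mul_norm_sq {c : ℝ} (hc : 0 < c) :
    Integrable (fun w : ℂ => Real.exp (-c * ‖w‖ ^ 2)) := by
  refine (GaussianFourier.integrable_cexp_neg_mul_sq_norm_add (V := ℂ)
    (b := c) (by simpa using hc) 0 0).norm.congr (.of_forall fun w => ?_)
  simp [Complex.norm_exp, ← Complex.ofReal_pow]

section MeanValue

variable {E : Type*} [NormedAddCommGroup E] [NormedSpace ℂ E] [CompleteSpace E]

lemma Complex.polarCoord_symm_eq_circleMap (r θ : ℝ) :
    Complex.polarCoord.symm (r, θ) = circleMap 0 r θ := by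
  simp [circleMap, exp_mul_I]

lemma Complex.continuous_polarCoord_symm : Continuous Complex.polarCoord.symm := by
  have : ⇑Complex.polarCoord.symm =
      fun p : ℝ × ℝ => (p.1 : ℂ) * (Real.cos p.2 + Real.sin p.2 * I) :=
    funext Complex.polarCoord_symm_apply
  rw [this]
  fun_prop

lemma Differentiable.setIntegral_Ioo_polarCoord_symm {g : ℂ → E} (hg : Differentiable ℂ g)
    (r : ℝ) : ∫ θ in Ioo (-π) π, g (Complex.polarCoord.symm (r, θ)) = (2 * π) • g 0 := by
  have hper : Function.Periodic (fun θ => g (circleMap 0 r θ)) (2 * π) :=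
    (periodic_circleMap 0 r).comp g
  have hmean := hg.diffContOnCl (s := Metric.ball 0 |r|).circleAverage
  rw [Real.circleAverage_def, inv_smul_eq_iff₀ (by positivity)] at hmean
  have hshift :
      ∫ θ in (0)..2 * π, g (circleMap 0 r θ) = ∫ θ in (-π)..π, g (circleMap 0 r θ) := by
    convert hper.intervalIntegral_add_eq 0 (-π) using 2 <;> ring
  rw [hshift] at hmean
  simp_rw [Complex.polarCoord_symm_eq_circleMap, ← integral_Ioc_eq_integral_Ioo,
    ← intervalIntegral.integral_of_le (by linarith [Real.pi_pos] : -π ≤ π), hmean]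

lemma Complex.integrableOn_polarCoord_symm_smul {F : Type*} [NormedAddCommGroup F]
    [NormedSpace ℝ F] {f : ℂ → F} (hf : Integrable f) (hfc : Continuous f) :
    IntegrableOn (fun p : ℝ × ℝ => p.1 • f (Complex.polarCoord.symm p)) polarCoord.target := by
  refine ⟨(continuous_fst.smul (hfc.comp continuous_polarCoord_symm)).aestronglyMeasurable, ?_⟩
  calc ∫⁻ p in polarCoord.target, ‖p.1 • f (Complex.polarCoord.symm p)‖ₑ
      = ∫⁻ p in polarCoord.target, ENNReal.ofReal p.1 • ‖f (Complex.polarCoord.symm p)‖ₑ :=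
        setLIntegral_congr_fun polarCoord.open_target.measurableSet fun p hp => by
          rw [enorm_smul, Real.enorm_of_nonneg (le_of_lt hp.1), smul_eq_mul]
    _ = ∫⁻ u, ‖f u‖ₑ := Complex.lintegral_comp_polarCoord_symm (‖f ·‖ₑ)
    _ < ⊤ := hf.2

lemma integral_Ioi_mul_exp_neg_sq_div {ℏ : ℝ} (hℏ : 0 < ℏ) :
    ∫ r in Ioi (0 : ℝ), r * Real.exp (-r ^ 2 / ℏ) = ℏ / 2 := by
  have h := integral_mul_cexp_neg_mul_sq (b := (ℏ : ℂ)⁻¹) (by simpa using hℏ)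
  apply ofReal_injective
  rw [← integral_complex_ofReal]
  push_cast
  simp_rw [neg_div, div_eq_inv_mul, ← neg_mul]
  rw [h]
  field_simp

lemma Differentiable.integral_exp_neg_norm_sq_div_smul {g : ℂ → E} (hg : Differentiable ℂ g)
    {ℏ : ℝ} (hℏ : 0 < ℏ) (hint : Integrable fun u : ℂ => Real.exp (-‖u‖ ^ 2 / ℏ) • g u) :
    ∫ u : ℂ, Real.exp (-‖u‖ ^ 2 / ℏ) • g u = (π * ℏ) • g 0 := by
  have hpolar :=
    Complex.integrableOn_polarCoord_symm_smul hint (by have := hg.continuous; fun_prop)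
  rw [← Complex.integral_comp_polarCoord_symm]
  rw [polarCoord_target, Measure.volume_eq_prod] at hpolar ⊢
  rw [setIntegral_prod _ hpolar]
  calc ∫ r in Ioi 0, ∫ θ in Ioo (-π) π, (r, θ).1 •
        Real.exp (-‖Complex.polarCoord.symm (r, θ)‖ ^ 2 / ℏ) • g (Complex.polarCoord.symm (r, θ))
      = ∫ r in Ioi 0, (2 * π * (r * Real.exp (-r ^ 2 / ℏ))) • g 0 :=
        setIntegral_congr_fun measurableSet_Ioi fun r (hr : 0 < r) => by
          simp_rw [Complex.norm_polarCoord_symm, abs_of_pos hr, smul_smul]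
          rw [integral_smul, hg.setIntegral_Ioo_polarCoord_symm r, smul_smul]
          ring_nf
    _ = (π * ℏ) • g 0 := by
        rw [integral_smul_const, integral_const_mul, integral_Ioi_mul_exp_neg_sq_div hℏ]
        ring_nf

end MeanValue

namespace Bargmann

variable {ℏ : ℝ} {ψ : ℂ → ℂ} {m n : ℕ}

noncomputable def density (ℏ : ℝ) (z : ℂ) : ℝ :=
  (π * ℏ)⁻¹ * Real.exp (-‖z‖ ^ 2 / ℏ)

lemma density_nonneg (hℏ : 0 < ℏ) (z : ℂ) : 0 ≤ density ℏ z := by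
  unfold density; positivity

@[fun_prop]
lemma continuous_density (ℏ : ℝ) : Continuous (density ℏ) := by
  unfold density; fun_prop

lemma bargmannMeasure_eq_withDensity (ℏ : ℝ) :
    bargmannMeasure ℏ = volume.withDensity fun w => ENNReal.ofReal (density ℏ w) := rfl

lemma integrable_bargmannMeasure_iff {E : Type*} [NormedAddCommGroup E] [NormedSpace ℝ E]
    (hℏ : 0 < ℏ) {g : ℂ → E} :
    Integrable g (bargmannMeasure ℏ) ↔ Integrable (fun w => density ℏ w • g w) := by
  rw [bargmannMeasure_eq_withDensity, integrable_withDensity_iff_integrable_smul'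
    (by fun_prop) (.of_forall fun _ => ENNReal.ofReal_lt_top)]
  simp_rw [ENNReal.toReal_ofReal (density_nonneg hℏ _)]

lemma integral_bargmannMeasure {E : Type*} [NormedAddCommGroup E] [NormedSpace ℝ E]
    (hℏ : 0 < ℏ) (g : ℂ → E) :
    ∫ w, g w ∂bargmannMeasure ℏ = ∫ w, density ℏ w • g w := by
  rw [bargmannMeasure_eq_withDensity, integral_withDensity_eq_integral_toReal_smul
    (by fun_prop) (.of_forall fun _ => ENNReal.ofReal_lt_top)]
  simp_rw [ENNReal.toReal_ofReal (density_nonneg hℏ _)]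

lemma memLp_exp_mul_norm (hℏ : 0 < ℏ) (c : ℝ) :
    MemLp (fun w : ℂ => Real.exp (c * ‖w‖)) 2 (bargmannMeasure ℏ) := by
  rw [memLp_two_iff_integrable_sq_norm (by fun_prop), integrable_bargmannMeasure_iff hℏ]
  refine ((integrable_exp_neg_mul_norm_sq (c := (2 * ℏ)⁻¹) (by positivity)).const_mul
    ((π * ℏ)⁻¹ * Real.exp (2 * c ^ 2 * ℏ))).mono (by fun_prop) (.of_forall fun w => ?_)
  -- completing the square: `2 c r - r² / ℏ ≤ 2 c² ℏ - r² / (2ℏ)`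
  have hsq : -‖w‖ ^ 2 / ℏ + 2 * (c * ‖w‖) ≤ 2 * c ^ 2 * ℏ + -(2 * ℏ)⁻¹ * ‖w‖ ^ 2 := by
    have := sq_nonneg (‖w‖ - 2 * c * ℏ)
    field_simp
    nlinarith
  rw [Real.norm_of_nonneg (by unfold density; positivity), Real.norm_of_nonneg (by positivity),
    density, Real.norm_of_nonneg (by positivity), smul_eq_mul, mul_assoc, mul_assoc,
    ← Real.exp_nat_mul, ← Real.exp_add, ← Real.exp_add]
  refine mul_le_mul_of_nonneg_left (Real.exp_le_exp.2 ?_) (by positivity)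
  exact_mod_cast hsq

lemma integrable_exp_mul_norm_mul_norm (hℏ : 0 < ℏ)
    (hψ : MemLp ψ 2 (bargmannMeasure ℏ)) (c : ℝ) :
    Integrable (fun w => Real.exp (c * ‖w‖) * ‖ψ w‖) (bargmannMeasure ℏ) :=
  (memLp_exp_mul_norm hℏ c).integrable_mul hψ.norm

lemma ofReal_density_add_mul_exp (ℏ : ℝ) (u z : ℂ) :
    (density ℏ (u + z) : ℂ) * exp (z * conj (u + z) / ℏ)
      = ((π * ℏ)⁻¹ * Real.exp (-‖u‖ ^ 2 / ℏ) : ℝ) * exp (-(u * conj z) / ℏ) := by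
  simp only [density, ofReal_mul, ofReal_exp, mul_assoc, ← exp_add]
  congr 2
  push_cast
  rw [← mul_conj', ← mul_conj', map_add]
  ring

theorem integral_exp_mul_conj_mul (hℏ : 0 < ℏ) {f : ℂ → ℂ} (hf : Differentiable ℂ f) (z : ℂ)
    (hint : Integrable (fun w => exp (z * conj w / ℏ) * f w) (bargmannMeasure ℏ)) :
    ∫ w, exp (z * conj w / ℏ) * f w ∂bargmannMeasure ℏ = f z := by
  set g : ℂ → ℂ := fun u => exp (-(u * conj z) / ℏ) * f (u + z) with hg_def
  have hshift : ∀ u, density ℏ (u + z) • (exp (z * conj (u + z) / ℏ) * f (u + z))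
      = (π * ℏ)⁻¹ • (Real.exp (-‖u‖ ^ 2 / ℏ) • g u) := fun u => by
    simp only [real_smul, ← mul_assoc, ofReal_density_add_mul_exp, hg_def]
    push_cast
    ring
  have hg : Differentiable ℂ g := by fun_prop
  rw [integrable_bargmannMeasure_iff hℏ] at hint
  have hint' : Integrable fun u => Real.exp (-‖u‖ ^ 2 / ℏ) • g u := by
    have hπℏ : π * ℏ ≠ 0 := by positivity
    refine ((hint.comp_add_right z).smul (π * ℏ)).congr (.of_forall fun u => ?_)
    rw [Pi.smul_apply, hshift, smul_smul, mul_inv_cancel₀ hπℏ, one_smul]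
  rw [integral_bargmannMeasure hℏ, ← integral_add_right_eq_self _ z]
  simp_rw [hshift]
  rw [integral_smul, hg.integral_exp_neg_norm_sq_div_smul hℏ hint', smul_smul,
    inv_mul_cancel₀ (by positivity), one_smul]
  simp [hg_def]

noncomputable def antiWickIntegrand (ℏ : ℝ) (ψ : ℂ → ℂ) (m n : ℕ) (z w : ℂ) : ℂ :=
  exp (z * conj w / ℏ) * w ^ m * conj w ^ n * ψ w

lemma continuous_antiWickIntegrand (hψ : Continuous ψ) (z : ℂ) :
    Continuous (antiWickIntegrand ℏ ψ m n z) := by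
  unfold antiWickIntegrand; fun_prop

lemma norm_antiWickIntegrand_le (hℏ : 0 < ℏ) {R : ℝ} {z : ℂ} (hz : ‖z‖ ≤ R) (w : ℂ) :
    ‖antiWickIntegrand ℏ ψ m n z w‖ ≤ (m + n)! * (Real.exp ((R / ℏ + 1) * ‖w‖) * ‖ψ w‖) := by
  have hre : (z * conj w / ℏ).re ≤ R / ℏ * ‖w‖ := by
    refine (re_le_norm _).trans ?_
    rw [norm_div, norm_mul, norm_conj, norm_real, Real.norm_of_nonneg hℏ.le, div_mul_eq_mul_div]
    gcongr
  have hpow : ‖w‖ ^ (m + n) ≤ (m + n)! * Real.exp ‖w‖ := by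
    have := Real.pow_div_factorial_le_exp _ (norm_nonneg w) (m + n)
    rwa [div_le_iff₀' (by positivity)] at this
  calc ‖antiWickIntegrand ℏ ψ m n z w‖
      = Real.exp (z * conj w / ℏ).re * ‖w‖ ^ (m + n) * ‖ψ w‖ := by
        simp only [antiWickIntegrand, norm_mul, norm_exp, norm_pow, norm_conj, pow_add]
        ring
    _ ≤ Real.exp (R / ℏ * ‖w‖) * ((m + n)! * Real.exp ‖w‖) * ‖ψ w‖ := by gcongr
    _ = (m + n)! * (Real.exp ((R / ℏ + 1) * ‖w‖) * ‖ψ w‖) := by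
        rw [add_mul, one_mul, Real.exp_add]; ring

lemma integrable_antiWickIntegrand (hℏ : 0 < ℏ) (hψ : Continuous ψ)
    (hψ2 : MemLp ψ 2 (bargmannMeasure ℏ)) (z : ℂ) :
    Integrable (antiWickIntegrand ℏ ψ m n z) (bargmannMeasure ℏ) :=
  ((integrable_exp_mul_norm_mul_norm hℏ hψ2 _).const_mul _).mono'
    (continuous_antiWickIntegrand hψ z).aestronglyMeasurable
    (.of_forall (norm_antiWickIntegrand_le hℏ le_rfl))

lemma hasDerivAt_antiWickIntegrand (ℏ : ℝ) (ψ : ℂ → ℂ) (m n : ℕ) (z w : ℂ) :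
    HasDerivAt (antiWickIntegrand ℏ ψ m n · w)
      ((ℏ : ℂ)⁻¹ * antiWickIntegrand ℏ ψ m (n + 1) z w) z := by
  have := (((hasDerivAt_id z).mul_const (conj w / ℏ)).cexp).mul_const
    (w ^ m * conj w ^ n * ψ w)
  refine (this.congr_deriv ?_).congr_of_eventuallyEq (.of_forall fun x => ?_)
  · simp only [antiWickIntegrand, id, mul_div_assoc, pow_succ]
    ring
  · simp only [antiWickIntegrand, id, mul_div_assoc]
    ring

lemma hasDerivAt_integral_antiWickIntegrand (hℏ : 0 < ℏ) (hψ : Continuous ψ)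
    (hψ2 : MemLp ψ 2 (bargmannMeasure ℏ)) (z : ℂ) :
    HasDerivAt (fun x => ∫ w, antiWickIntegrand ℏ ψ m n x w ∂bargmannMeasure ℏ)
      ((ℏ : ℂ)⁻¹ * ∫ w, antiWickIntegrand ℏ ψ m (n + 1) z w ∂bargmannMeasure ℏ) z := by
  have hbound := ((integrable_exp_mul_norm_mul_norm hℏ hψ2
    ((‖z‖ + 1) / ℏ + 1)).const_mul ((m + (n + 1))! : ℝ)).const_mul ℏ⁻¹
  rw [← integral_const_mul]
  refine (hasDerivAt_integral_of_dominated_loc_of_deriv_le (Metric.ball_mem_nhds z one_pos)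
    (.of_forall fun x => (continuous_antiWickIntegrand hψ x).aestronglyMeasurable)
    (integrable_antiWickIntegrand hℏ hψ hψ2 z)
    ((continuous_antiWickIntegrand hψ z).aestronglyMeasurable.const_mul _)
    (.of_forall fun w x hx => ?_) hbound
    (.of_forall fun w x _ => hasDerivAt_antiWickIntegrand ℏ ψ m n x w)).2
  have hx : ‖x‖ ≤ ‖z‖ + 1 := by
    linarith [norm_le_norm_add_norm_sub' x z, mem_ball_iff_norm.1 hx]
  rw [norm_mul, norm_inv, norm_real, Real.norm_of_nonneg hℏ.le]
  exact mul_le_mul_of_nonneg_left (norm_antiWickIntegrand_le hℏ hx w) (by positivity)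

end Bargmann

/-- Toeplitz quantization is anti-Wick ordered: for an entire function `ψ` square-integrable
with respect to `μ_ℏ` and natural numbers `m, n`,
`∫_ℂ exp(z conj(w)/ℏ) wᵐ conj(w)ⁿ ψ(w) dμ_ℏ(w) = ℏⁿ (d/dz)ⁿ [zᵐ ψ(z)]`. -/
theorem toeplitz_antiWick_ordering (ℏ : ℝ) (hℏ : 0 < ℏ) (ψ : ℂ → ℂ)
    (hψ : Differentiable ℂ ψ)
    (hψ2 : Integrable (fun w => ‖ψ w‖ ^ 2) (bargmannMeasure ℏ)) (m n : ℕ) (z : ℂ) :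
    ∫ w : ℂ, Complex.exp (z * (starRingEnd ℂ) w / (ℏ : ℂ)) * w ^ m *
        (starRingEnd ℂ) w ^ n * ψ w ∂(bargmannMeasure ℏ) =
      (ℏ : ℂ) ^ n * deriv^[n] (fun u : ℂ => u ^ m * ψ u) z := by
  have hψL2 : MemLp ψ 2 (bargmannMeasure ℏ) :=
    (memLp_two_iff_integrable_sq_norm hψ.continuous.aestronglyMeasurable).2 hψ2
  show ∫ w, Bargmann.antiWickIntegrand ℏ ψ m n z w ∂bargmannMeasure ℏ = _
  induction n generalizing z with
  | zero =>
    simp only [Bargmann.antiWickIntegrand, pow_zero, mul_one, one_mul, mul_assoc,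
      Function.iterate_zero, id_eq]
    refine Bargmann.integral_exp_mul_conj_mul hℏ (f := fun u => u ^ m * ψ u) (by fun_prop) z ?_
    refine (Bargmann.integrable_antiWickIntegrand hℏ hψ.continuous hψL2 (m := m) (n := 0)
      z).congr (.of_forall fun w => ?_)
    simp only [Bargmann.antiWickIntegrand, pow_zero, mul_one, mul_assoc]
  | succ n ih =>
    have hderiv :=
      Bargmann.hasDerivAt_integral_antiWickIntegrand hℏ hψ.continuous hψL2 (m := m) (n := n) z
    rw [funext ih] at hderiv
    have hF : Differentiable ℂ (deriv^[n] fun u => u ^ m * ψ u) :=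
      (ContDiff.iterate_deriv n ((differentiable_pow m).mul hψ).contDiff).differentiable (by simp)
    have hℏ0 : (ℏ : ℂ) ≠ 0 := ofReal_ne_zero.2 hℏ.ne'
    rw [Function.iterate_succ_apply', pow_succ', mul_assoc,
      ((hF z).hasDerivAt.const_mul _).unique hderiv, mul_inv_cancel_left₀ hℏ0]
end

section
/- Position-to-momentum change of basis on the θ-torus is a discrete Fourier transform: let N be a positive integer, m ∈ ℤ, θ₁, θ₂ ∈ ℝ, and let φ : ℝ → ℂ be a Schwartz function. Then (1/√N)·e^{2πiθ₂m/N} ∑_{k∈ℤ} e^{2πiθ₂k} φ((m+θ₁)/N + k) = e^{−2πiθ₁θ₂/N} ∑_{n=0}^{N−1} (e^{−2πimn/N}/√N) · e^{−2πinθ₁/N} ∑_{k∈ℤ} e^{−2πiθ₁k} (𝓕φ)(−(θ₂ + n + Nk)), where 𝓕φ(ξ) = ∫_ℝ e^{−2πiξx} φ(x) dx is the Fourier transform and all series converge absolutely. -/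
/-!
Poisson summation, applied to the modulated translate `x ↦ e^{2πiθ₂x} φ(a + x)` with
`a = (m + θ₁)/N`, turns the position comb into the sum over `j ∈ ℤ` of
`e^{−2πia(θ₂+j)} 𝓕φ(−(θ₂+j))`. Splitting `j = kN + n` by residues mod `N` and expanding the
phase gives the discrete Fourier transform; the leftover factor `e^{−2πimk}` is `1`.
-/

open MeasureTheory Complex Real

/-- The Fourier transform `𝓕φ(ξ) = ∫_ℝ e^{−2πiξx} φ(x) dx` of a Schwartz function. -/
noncomputable def schwartzFourier (φ : SchwartzMap ℝ ℂ) (ξ : ℝ) : ℂ :=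
  ∫ x : ℝ, Complex.exp (-(2 * Real.pi * Complex.I * ξ * x)) * φ x

open Filter Asymptotics
open scoped FourierTransform SchwartzMap

theorem tendsto_affine_cocompact {c : ℝ} (hc : c ≠ 0) (d : ℝ) :
    Tendsto (fun x : ℝ => d + c * x) (cocompact ℝ) (cocompact ℝ) :=
  ((Homeomorph.mulLeft₀ c hc).trans (Homeomorph.addLeft d)).map_cocompact.le

theorem isTheta_affine_cocompact {c : ℝ} (hc : c ≠ 0) (d : ℝ) :
    (fun x : ℝ => d + c * x) =Θ[cocompact ℝ] id :=
  (isLittleO_const_left.mpr (Or.inr tendsto_norm_cocompact_atTop)).add_isTheta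
    ((isTheta_refl _ _).const_mul_left hc)

theorem Asymptotics.IsBigO.comp_affine_cocompact {E : Type*} [Norm E] {f : ℝ → E} {s : ℝ}
    (hf : f =O[cocompact ℝ] (|·| ^ s)) {c : ℝ} (hc : c ≠ 0) (d : ℝ) :
    (fun x => f (d + c * x)) =O[cocompact ℝ] (|·| ^ s) :=
  (hf.comp_tendsto (tendsto_affine_cocompact hc d)).trans <| IsTheta.isBigO <|
    ((isTheta_affine_cocompact hc d).norm_left.norm_right).rpow
      (.of_forall fun _ => abs_nonneg _) (.of_forall fun _ => abs_nonneg _)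

namespace SchwartzMap

variable {E : Type*} [NormedAddCommGroup E] [NormedSpace ℝ E]

theorem isBigO_cocompact_abs_rpow (ψ : 𝓢(ℝ, E)) (s : ℝ) :
    ⇑ψ =O[cocompact ℝ] (|·| ^ s) := by
  simpa only [Real.norm_eq_abs] using ψ.isBigO_cocompact_rpow s

theorem summable_norm_comp_affine_int (ψ : 𝓢(ℝ, E)) {c : ℝ} (hc : c ≠ 0) (d : ℝ) :
    Summable fun k : ℤ => ‖ψ (d + c * k)‖ :=
  summable_of_isBigO (Real.summable_abs_int_rpow one_lt_two)
    (((ψ.isBigO_cocompact_abs_rpow (-2)).comp_affine_cocompact hc d).comp_tendsto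
      Int.tendsto_coe_cofinite).norm_left

end SchwartzMap

theorem Real.fourier_exp_mul_comp_add (f : ℝ → ℂ) (θ a ξ : ℝ) :
    𝓕 (fun x : ℝ => cexp (2 * π * I * θ * x) * f (a + x)) ξ =
      cexp (2 * π * I * a * (ξ - θ)) * 𝓕 f (ξ - θ) := by
  simp only [Real.fourier_real_eq_integral_exp_smul, smul_eq_mul]
  rw [← integral_const_mul]
  conv_rhs => rw [← integral_add_left_eq_self _ a]
  refine integral_congr_ae (.of_forall fun x => ?_)
  simp only [← mul_assoc, ← Complex.exp_add]
  push_cast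
  ring_nf

theorem SchwartzMap.tsum_exp_mul_apply_add_int (φ : 𝓢(ℝ, ℂ)) (θ a : ℝ) :
    ∑' k : ℤ, cexp (2 * π * I * θ * k) * φ (a + k) =
      ∑' j : ℤ, cexp (-(2 * π * I * a * (θ + j))) * 𝓕 (⇑φ) (-(θ + j)) := by
  set g : ℝ → ℂ := fun x => cexp (2 * π * I * θ * x) * φ (a + x)
  have hg : g =O[cocompact ℝ] (|·| ^ (-2 : ℝ)) := by
    refine (isBigO_of_le _ fun x => ?_).trans
      ((φ.isBigO_cocompact_abs_rpow _).comp_affine_cocompact one_ne_zero a)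
    simp [g, Complex.norm_exp]
  have hFg : 𝓕 g =O[cocompact ℝ] (|·| ^ (-2 : ℝ)) := by
    refine (isBigO_of_le _ fun ξ => ?_).trans
      (((𝓕 φ).isBigO_cocompact_abs_rpow _).comp_affine_cocompact one_ne_zero (-θ))
    simp [g, Real.fourier_exp_mul_comp_add, Complex.norm_exp, SchwartzMap.fourier_coe,
      sub_eq_neg_add]
  have hpoisson := Real.tsum_eq_tsum_fourier_of_rpow_decay (by fun_prop) one_lt_two hg hFg 0
  simp only [zero_add, QuotientAddGroup.mk_zero, fourier_eval_zero, mul_one] at hpoisson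
  calc ∑' k : ℤ, cexp (2 * π * I * θ * k) * φ (a + k) = ∑' k : ℤ, g k := by simp [g]
    _ = ∑' j : ℤ, 𝓕 g (-j : ℤ) := by rw [hpoisson, ← (Equiv.neg ℤ).tsum_eq]; rfl
    _ = _ := tsum_congr fun j => by
      simp only [g, Real.fourier_exp_mul_comp_add]
      push_cast
      ring_nf

theorem SchwartzMap.summable_exp_mul_fourier_neg_add_int (φ : 𝓢(ℝ, ℂ)) (θ a : ℝ) :
    Summable fun j : ℤ => cexp (-(2 * π * I * a * (θ + j))) * 𝓕 (⇑φ) (-(θ + j)) := by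
  refine .of_norm (((𝓕 φ).summable_norm_comp_affine_int (neg_ne_zero.mpr one_ne_zero)
    (-θ)).congr fun j => ?_)
  rw [norm_mul, ← SchwartzMap.fourier_coe, show -(θ + j) = -θ + -1 * (j : ℝ) by ring]
  simp [Complex.norm_exp]

theorem tsum_int_eq_sum_range_tsum {α : Type*} [AddCommGroup α] [UniformSpace α]
    [IsUniformAddGroup α] [CompleteSpace α] [T2Space α] {f : ℤ → α} (hf : Summable f)
    (N : ℕ) [NeZero N] :
    ∑' j, f j = ∑ n ∈ Finset.range N, ∑' k : ℤ, f (k * N + n) := by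
  let e : Fin N × ℤ ≃ ℤ := (Equiv.prodComm _ _).trans (Int.divModEquiv N).symm
  have he : Summable (f ∘ e) := e.summable_iff.mpr hf
  rw [← e.tsum_eq, ← Function.comp_def, he.tsum_prod' he.prod_factor, tsum_fintype]
  exact Fin.sum_univ_eq_sum_range (fun n => ∑' k : ℤ, f (k * N + n)) N

theorem schwartzFourier_eq_fourier (φ : 𝓢(ℝ, ℂ)) (ξ : ℝ) :
    schwartzFourier φ ξ = 𝓕 (⇑φ) ξ := by
  rw [Real.fourier_real_eq_integral_exp_smul]
  refine integral_congr_ae (.of_forall fun x => ?_)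
  simp only [smul_eq_mul]
  push_cast
  ring_nf

/-- The exponents of the two sides differ by `2πi·mk` with `m, k ∈ ℤ`. -/
theorem exp_theta_torus_phase (N : ℕ) [NeZero N] (m k : ℤ) (n : ℕ) (θ₁ θ₂ : ℝ) :
    cexp (2 * π * I * θ₂ * m / N) *
        cexp (-(2 * π * I * (((m + θ₁) / N : ℝ) : ℂ) * (θ₂ + (k * N + n : ℤ)))) =
      cexp (-(2 * π * I * θ₁ * θ₂ / N)) * cexp (-(2 * π * I * m * n / N)) *
        cexp (-(2 * π * I * n * θ₁ / N)) * cexp (-(2 * π * I * θ₁ * k)) := by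
  have hN : (N : ℂ) ≠ 0 := Nat.cast_ne_zero.mpr (NeZero.ne N)
  simp only [← Complex.exp_add]
  rw [Complex.exp_eq_exp_iff_exists_int]
  refine ⟨-(m * k), ?_⟩
  push_cast
  field_simp
  ring

/-- Position-to-momentum change of basis on the `θ`-torus is a discrete Fourier transform:
for `h = 1/N`, pairing the position-state comb `Φ_m^{(θ)}` and the combination
`e^{−2πiθ₁θ₂/N} ∑_n 𝓕_{mn} Φ̃_n^{(θ)}` of momentum-state combs with a Schwartz test function
`φ` gives the same value, and all the `ℤ`-indexed series converge absolutely. -/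
theorem theta_torus_position_momentum_dft (N : ℕ) (hN : 0 < N) (m : ℤ) (θ₁ θ₂ : ℝ)
    (φ : SchwartzMap ℝ ℂ) :
    (Summable fun k : ℤ =>
      ‖Complex.exp (2 * Real.pi * Complex.I * θ₂ * k) * φ (((m : ℝ) + θ₁) / N + k)‖) ∧
    (∀ n : ℕ, n < N → Summable fun k : ℤ =>
      ‖Complex.exp (-(2 * Real.pi * Complex.I * θ₁ * k)) *
        schwartzFourier φ (-(θ₂ + (n : ℝ) + (N : ℝ) * k))‖) ∧
    (1 / (Real.sqrt N : ℂ)) * Complex.exp (2 * Real.pi * Complex.I * θ₂ * m / N) *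
        (∑' k : ℤ, Complex.exp (2 * Real.pi * Complex.I * θ₂ * k) *
          φ (((m : ℝ) + θ₁) / N + k)) =
      Complex.exp (-(2 * Real.pi * Complex.I * θ₁ * θ₂ / N)) *
        ∑ n ∈ Finset.range N,
          (Complex.exp (-(2 * Real.pi * Complex.I * m * n / N)) / (Real.sqrt N : ℂ)) *
            Complex.exp (-(2 * Real.pi * Complex.I * n * θ₁ / N)) *
            ∑' k : ℤ, Complex.exp (-(2 * Real.pi * Complex.I * θ₁ * k)) *
              schwartzFourier φ (-(θ₂ + (n : ℝ) + (N : ℝ) * k)) := by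
  have : NeZero N := .of_pos hN
  refine ⟨?_, fun n _ => ?_, ?_⟩
  · simpa [Complex.norm_exp] using
      φ.summable_norm_comp_affine_int one_ne_zero (((m : ℝ) + θ₁) / N)
  · refine ((𝓕 φ).summable_norm_comp_affine_int (neg_ne_zero.mpr (NeZero.ne (N : ℝ)))
      (-(θ₂ + n))).congr fun k => ?_
    rw [norm_mul, schwartzFourier_eq_fourier, ← SchwartzMap.fourier_coe,
      show -(θ₂ + n + N * k) = -(θ₂ + n) + -(N : ℝ) * k by ring]
    simp [Complex.norm_exp]
  rw [φ.tsum_exp_mul_apply_add_int, tsum_int_eq_sum_range_tsum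
    (φ.summable_exp_mul_fourier_neg_add_int θ₂ (((m : ℝ) + θ₁) / N)) N, Finset.mul_sum,
    Finset.mul_sum]
  refine Finset.sum_congr rfl fun n _ => ?_
  simp only [← tsum_mul_left]
  refine tsum_congr fun k => ?_
  rw [schwartzFourier_eq_fourier,
    show -(θ₂ + ((k * N + n : ℤ) : ℝ)) = -(θ₂ + n + N * k) by push_cast; ring]
  linear_combination (𝓕 (⇑φ) (-(θ₂ + n + N * k)) / √N) *
    exp_theta_torus_phase N m k n θ₁ θ₂
end
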